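/- At every point of U and for all 1 ≤ i ≤ n and 1 ≤ j ≤ n, the Poisson bracket satisfies {μ_i, t_j} = t_{j−i} (where t₀ = 1 and t_k = 0 for k < 0). -/

import Mathlib

/-- The function `t_j` on `ℂⁿ × ℂⁿ`: the coefficient of `T^{n-j}` in `∏ l (T - x_l)`,
a function of `x = q.1` only. -/
noncomputable def tFun (n j : ℕ) (q : (Fin n → ℂ) × (Fin n → ℂ)) : ℂ :=
  (∏ l : Fin n, (Polynomial.X - Polynomial.C (q.1 l))).coeff (n - j)

/-- The function `μ_i` on `ℂⁿ × ℂⁿ`: the coefficient of `T^{i-1}` in the Lagrange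
interpolation polynomial `Q` of degree `< n` with `Q(x_l) = y_l` for all `l`. -/
noncomputable def muFun (n i : ℕ) (q : (Fin n → ℂ) × (Fin n → ℂ)) : ℂ :=
  (Lagrange.interpolate Finset.univ q.1 q.2).coeff (i - 1)

/-- The Poisson bracket `{f,g} = Σ_l (∂f/∂x_l ∂g/∂y_l − ∂f/∂y_l ∂g/∂x_l)` at a point,
with complex partial derivatives. -/
noncomputable def poissonAt {n : ℕ} (f g : (Fin n → ℂ) × (Fin n → ℂ) → ℂ)
    (q : (Fin n → ℂ) × (Fin n → ℂ)) : ℂ :=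
  ∑ l : Fin n,
    (fderiv ℂ f q (Pi.single l 1, 0) * fderiv ℂ g q (0, Pi.single l 1)
      - fderiv ℂ f q (0, Pi.single l 1) * fderiv ℂ g q (Pi.single l 1, 0))

open Polynomial Finset

section Helpers

variable {n : ℕ}

lemma diff_coeff (s : Finset (Fin n)) (k : ℕ) :
    Differentiable ℂ (fun x : Fin n → ℂ => (∏ l ∈ s, (X - C (x l))).coeff k) := by
  induction s using Finset.induction generalizing k with
  | empty => simpa using differentiable_const (0:ℂ)
  | @insert a s ha ih =>
    have h : (fun x : Fin n → ℂ => (∏ l ∈ insert a s, (X - C (x l))).coeff k)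
        = fun x => (X * ∏ l ∈ s, (X - C (x l))).coeff k
            - x a * (∏ l ∈ s, (X - C (x l))).coeff k := by
      funext x
      rw [Finset.prod_insert ha, sub_mul, Polynomial.coeff_sub, C_mul']
      simp [Polynomial.coeff_smul, smul_eq_mul]
    rw [h]
    apply Differentiable.sub
    · cases k with
      | zero => simpa [Polynomial.mul_coeff_zero] using differentiable_const (0:ℂ)
      | succ m => simpa [Polynomial.coeff_X_mul] using ih m
    · exact ((differentiable_apply a)).mul (ih k)

lemma diff_prod {ι E : Type*} [NormedAddCommGroup E] [NormedSpace ℂ E] [DecidableEq ι]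
    (s : Finset ι) (f : ι → E → ℂ) (h : ∀ l, Differentiable ℂ (f l)) :
    Differentiable ℂ (fun x => ∏ l ∈ s, f l x) := by
  induction s using Finset.induction with
  | empty => simpa using differentiable_const (1:ℂ)
  | @insert a s ha ih =>
    have : (fun x => ∏ l ∈ insert a s, f l x) = fun x => f a x * ∏ l ∈ s, f l x := by
      funext x; rw [Finset.prod_insert ha]
    rw [this]; exact (h a).mul ih

lemma fderiv_line {E : Type*} [NormedAddCommGroup E] [NormedSpace ℂ E]
    (f : E → ℂ) (q v : E) (c : ℂ) (hf : DifferentiableAt ℂ f q)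
    (h : HasDerivAt (fun s : ℂ => f (q + s • v)) c 0) : fderiv ℂ f q v = c := by
  have hline : HasDerivAt (fun s : ℂ => q + s • v) v 0 := by
    simpa using ((hasDerivAt_id (0:ℂ)).smul_const v).const_add q
  have h2 : HasDerivAt (fun s : ℂ => f (q + s • v)) (fderiv ℂ f q v) 0 := by
    have hfq : HasFDerivAt f (fderiv ℂ f q) (q + (0:ℂ) • v) := by
      simp only [zero_smul, add_zero]; exact hf.hasFDerivAt
    exact hfq.comp_hasDerivAt 0 hline
  exact h2.unique h

lemma tFun_diff {j : ℕ} : Differentiable ℂ (tFun n j) :=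
  (diff_coeff univ (n - j)).comp differentiable_fst

lemma tFun_fderiv_y {j : ℕ} (q : (Fin n → ℂ) × (Fin n → ℂ)) (l : Fin n) :
    fderiv ℂ (tFun n j) q (0, Pi.single l 1) = 0 := by
  apply fderiv_line _ _ _ _ (tFun_diff q)
  have : (fun s : ℂ => tFun n j (q + s • (((0 : Fin n → ℂ), (Pi.single l 1 : Fin n → ℂ)) :
        (Fin n → ℂ) × (Fin n → ℂ)))) = fun _ => tFun n j q := by
    funext s
    simp [tFun]
  rw [this]
  exact hasDerivAt_const 0 _

lemma tFun_fderiv_x {j : ℕ} (q : (Fin n → ℂ) × (Fin n → ℂ)) (l : Fin n) :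
    fderiv ℂ (tFun n j) q (Pi.single l 1, 0)
      = -(∏ m ∈ univ.erase l, (X - C (q.1 m))).coeff (n - j) := by
  apply fderiv_line _ _ _ _ (tFun_diff q)
  have key : (fun s : ℂ => tFun n j (q + s • (((Pi.single l 1 : Fin n → ℂ), (0 : Fin n → ℂ)) :
        (Fin n → ℂ) × (Fin n → ℂ))))
      = fun s => tFun n j q - s * (∏ m ∈ univ.erase l, (X - C (q.1 m))).coeff (n - j) := by
    funext s
    have h1 : ∀ m : Fin n, (q + s • (((Pi.single l 1 : Fin n → ℂ), (0 : Fin n → ℂ)) :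
          (Fin n → ℂ) × (Fin n → ℂ))).1 m
        = q.1 m + s * (Pi.single l 1 : Fin n → ℂ) m := by intro m; simp [Pi.single_apply]
    have hprod : ∏ m : Fin n, (X - C ((q + s • (((Pi.single l 1 : Fin n → ℂ), (0 : Fin n → ℂ)) :
          (Fin n → ℂ) × (Fin n → ℂ))).1 m))
        = ((X - C (q.1 l)) - C s) * ∏ m ∈ univ.erase l, (X - C (q.1 m)) := by
      rw [← Finset.mul_prod_erase univ _ (mem_univ l)]
      congr 1
      · rw [h1 l, Pi.single_eq_same, mul_one, map_add]; ring
      · exact Finset.prod_congr rfl fun m hm => by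
          rw [h1 m, Pi.single_eq_of_ne (Finset.mem_erase.mp hm).1, mul_zero, add_zero]
    have hfull : ∏ m : Fin n, (X - C (q.1 m))
        = (X - C (q.1 l)) * ∏ m ∈ univ.erase l, (X - C (q.1 m)) :=
      (Finset.mul_prod_erase univ _ (mem_univ l)).symm
    simp only [tFun, hprod]
    rw [hfull, sub_mul, Polynomial.coeff_sub, C_mul', Polynomial.coeff_smul, smul_eq_mul]
  rw [key]
  simpa using ((hasDerivAt_id (0:ℂ)).mul_const
    ((∏ m ∈ univ.erase l, (X - C (q.1 m))).coeff (n - j))).const_sub (tFun n j q)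

/-- The coefficient of the Lagrange basis polynomial, as an explicit function. -/
noncomputable def Bco (k : ℕ) (x : Fin n → ℂ) (m : Fin n) : ℂ :=
  (∏ l ∈ univ.erase m, (x m - x l))⁻¹ * (∏ l ∈ univ.erase m, (X - C (x l))).coeff k

lemma basis_eq (x : Fin n → ℂ) (m : Fin n) :
    Lagrange.basis univ x m
      = C (∏ l ∈ univ.erase m, (x m - x l))⁻¹ * ∏ l ∈ univ.erase m, (X - C (x l)) := by
  unfold Lagrange.basis Lagrange.basisDivisor
  rw [Finset.prod_mul_distrib, ← map_prod, ← Finset.prod_inv_distrib]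

lemma basis_coeff (x : Fin n → ℂ) (m : Fin n) (k : ℕ) :
    (Lagrange.basis univ x m).coeff k = Bco k x m := by
  rw [basis_eq, Polynomial.coeff_C_mul, Bco]

lemma muFun_eq {i : ℕ} (q : (Fin n → ℂ) × (Fin n → ℂ)) :
    muFun n i q = ∑ m : Fin n, q.2 m * Bco (i - 1) q.1 m := by
  unfold muFun Bco
  rw [Lagrange.interpolate_apply, Polynomial.finset_sum_coeff]
  refine Finset.sum_congr rfl fun m _ => ?_
  rw [basis_eq, ← mul_assoc, ← C_mul, Polynomial.coeff_C_mul, mul_assoc]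

lemma muFun_diffAt {i : ℕ} (q : (Fin n → ℂ) × (Fin n → ℂ)) (hq : Function.Injective q.1) :
    DifferentiableAt ℂ (muFun n i) q := by
  have : muFun n i = fun q : (Fin n → ℂ) × (Fin n → ℂ) =>
      ∑ m : Fin n, q.2 m * Bco (i - 1) q.1 m := funext muFun_eq
  rw [this]
  apply DifferentiableAt.fun_sum
  intro m _
  apply DifferentiableAt.mul
  · exact ((differentiable_apply m).comp (differentiable_snd (𝕜 := ℂ) (E := Fin n → ℂ) (F := Fin n → ℂ))).differentiableAt
  · unfold Bco
    apply DifferentiableAt.mul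
    · apply DifferentiableAt.inv
      · exact (diff_prod (univ.erase m) _ fun l =>
          ((differentiable_apply m).sub (differentiable_apply l)).comp
            (differentiable_fst (𝕜 := ℂ) (E := Fin n → ℂ) (F := Fin n → ℂ))).differentiableAt
      · exact Finset.prod_ne_zero_iff.mpr fun l hl =>
          sub_ne_zero.mpr fun h => (Finset.mem_erase.mp hl).1.symm (hq h)
    · exact ((diff_coeff (univ.erase m) (i-1)).comp differentiable_fst).differentiableAt

lemma muFun_fderiv_y {i : ℕ} (q : (Fin n → ℂ) × (Fin n → ℂ)) (hq : Function.Injective q.1)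
    (l : Fin n) :
    fderiv ℂ (muFun n i) q (0, Pi.single l 1) = Bco (i - 1) q.1 l := by
  apply fderiv_line _ _ _ _ (muFun_diffAt q hq)
  have key : (fun s : ℂ => muFun n i
        (q + s • (((0 : Fin n → ℂ), (Pi.single l 1 : Fin n → ℂ)) : (Fin n → ℂ) × (Fin n → ℂ))))
      = fun s => muFun n i q + s * Bco (i - 1) q.1 l := by
    funext s
    rw [muFun_eq, muFun_eq]
    have h1 : (q + s • (((0 : Fin n → ℂ), (Pi.single l 1 : Fin n → ℂ)))).1 = q.1 := by simp
    rw [h1]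
    have h2 : ∑ m : Fin n, (q + s • (((0 : Fin n → ℂ), (Pi.single l 1 : Fin n → ℂ)) :
          (Fin n → ℂ) × (Fin n → ℂ))).2 m * Bco (i-1) q.1 m
        = ∑ m : Fin n, (q.2 m * Bco (i-1) q.1 m
            + s * ((Pi.single l 1 : Fin n → ℂ) m * Bco (i-1) q.1 m)) := by
      refine Finset.sum_congr rfl fun m _ => ?_
      have h3 : (q + s • (((0 : Fin n → ℂ), (Pi.single l 1 : Fin n → ℂ)) :
          (Fin n → ℂ) × (Fin n → ℂ))).2 m = q.2 m + s * (Pi.single l 1 : Fin n → ℂ) m := by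
        simp
      rw [h3]; ring
    rw [h2, Finset.sum_add_distrib, ← Finset.mul_sum]
    congr 2
    rw [Finset.sum_eq_single l]
    · rw [Pi.single_eq_same, one_mul]
    · intro m _ hm; rw [Pi.single_eq_of_ne hm, zero_mul]
    · intro h; exact absurd (mem_univ l) h
  rw [key]
  simpa using ((hasDerivAt_id (0:ℂ)).mul_const (Bco (i-1) q.1 l)).const_add (muFun n i q)

lemma natDeg_P (x : Fin n → ℂ) : (∏ l : Fin n, (X - C (x l))).natDegree = n := by
  rw [Polynomial.natDegree_prod _ _ (fun l _ => X_sub_C_ne_zero (x l))]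
  simp [natDegree_X_sub_C]

lemma Pl_eq_div (x : Fin n → ℂ) (l : Fin n) :
    ∏ m ∈ univ.erase l, (X - C (x m)) = (∏ m : Fin n, (X - C (x m))) /ₘ (X - C (x l)) := by
  rw [← Finset.mul_prod_erase univ _ (mem_univ l),
    mul_divByMonic_cancel_left _ (monic_X_sub_C _)]

/-- The explicit polynomial whose values at the nodes are `(P_l).coeff (n-j)`. -/
noncomputable def Qpoly (n j : ℕ) (x : Fin n → ℂ) : ℂ[X] :=
  ∑ k ∈ Icc (n - j + 1) n, C ((∏ l : Fin n, (X - C (x l))).coeff k) * X ^ (k - (n - j + 1))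

lemma Qpoly_eval (j : ℕ) (x : Fin n → ℂ) (l : Fin n) :
    (Qpoly n j x).eval (x l) = (∏ m ∈ univ.erase l, (X - C (x m))).coeff (n - j) := by
  rw [Pl_eq_div, coeff_divByMonic_X_sub_C, natDeg_P, Qpoly]
  rw [Polynomial.eval_finset_sum]
  refine Finset.sum_congr rfl fun k hk => ?_
  rw [eval_mul, eval_C, eval_pow, eval_X, mul_comm]

lemma Qpoly_degree (j : ℕ) (x : Fin n → ℂ) :
    (Qpoly n j x).degree < n := by
  refine lt_of_le_of_lt (Polynomial.degree_sum_le _ _) ?_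
  rw [Finset.sup_lt_iff (by exact_mod_cast WithBot.bot_lt_coe n)]
  intro k hk
  refine lt_of_le_of_lt (Polynomial.degree_C_mul_X_pow_le _ _) ?_
  obtain ⟨h1, h2⟩ := Finset.mem_Icc.mp hk
  exact_mod_cast (show k - (n - j + 1) < n by omega)

lemma Qpoly_coeff (i j : ℕ) (hi1 : 1 ≤ i) (hin : i ≤ n) (hjn : j ≤ n)
    (x : Fin n → ℂ) :
    (Qpoly n j x).coeff (i - 1)
      = if i ≤ j then (∏ l : Fin n, (X - C (x l))).coeff (n - (j - i)) else 0 := by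
  rw [Qpoly, Polynomial.finset_sum_coeff]
  by_cases hij : i ≤ j
  · rw [if_pos hij]
    rw [Finset.sum_eq_single (n - j + i)]
    · rw [Polynomial.coeff_C_mul, Polynomial.coeff_X_pow, if_pos (by omega), mul_one]
      congr 1
      omega
    · intro k hk hkne
      obtain ⟨h1, h2⟩ := Finset.mem_Icc.mp hk
      rw [Polynomial.coeff_C_mul, Polynomial.coeff_X_pow, if_neg (by omega), mul_zero]
    · intro h
      exact absurd (Finset.mem_Icc.mpr ⟨by omega, by omega⟩) h
  · rw [if_neg hij]
    refine Finset.sum_eq_zero fun k hk => ?_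
    obtain ⟨h1, h2⟩ := Finset.mem_Icc.mp hk
    rw [Polynomial.coeff_C_mul, Polynomial.coeff_X_pow, if_neg (by omega), mul_zero]

lemma key_sum (hn : 1 ≤ n) (i j : ℕ) (hi1 : 1 ≤ i) (hin : i ≤ n) (hj1 : 1 ≤ j) (hjn : j ≤ n)
    (x : Fin n → ℂ) (hq : Function.Injective x) :
    ∑ l : Fin n, (Lagrange.basis univ x l).coeff (i - 1)
        * (∏ m ∈ univ.erase l, (X - C (x m))).coeff (n - j)
      = if i ≤ j then (∏ l : Fin n, (X - C (x l))).coeff (n - (j - i)) else 0 := by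
  have hsum : ∑ l : Fin n, (Lagrange.basis univ x l).coeff (i - 1)
        * (∏ m ∈ univ.erase l, (X - C (x m))).coeff (n - j)
      = (Lagrange.interpolate univ x
          (fun l => (∏ m ∈ univ.erase l, (X - C (x m))).coeff (n - j))).coeff (i - 1) := by
    rw [Lagrange.interpolate_apply, Polynomial.finset_sum_coeff]
    exact Finset.sum_congr rfl fun l _ => by rw [Polynomial.coeff_C_mul, mul_comm]
  rw [hsum]
  have hvals : (fun l => (∏ m ∈ univ.erase l, (X - C (x m))).coeff (n - j))
      = fun l => (Qpoly n j x).eval (x l) := by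
    funext l; rw [Qpoly_eval]
  rw [hvals]
  rw [← Lagrange.eq_interpolate (f := Qpoly n j x) hq.injOn
    (by rw [Finset.card_univ, Fintype.card_fin]; exact Qpoly_degree j x)]
  exact Qpoly_coeff i j hi1 hin hjn x

end Helpers

theorem stmt12 (n : ℕ) (hn : 1 ≤ n) (i j : ℕ)
    (hi1 : 1 ≤ i) (hin : i ≤ n) (hj1 : 1 ≤ j) (hjn : j ≤ n)
    (q : (Fin n → ℂ) × (Fin n → ℂ)) (hq : Function.Injective q.1) :
    poissonAt (muFun n i) (tFun n j) q =
      if i ≤ j then tFun n (j - i) q else 0 := by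
  unfold poissonAt
  have hterm : ∀ l : Fin n,
      fderiv ℂ (muFun n i) q (Pi.single l 1, 0) * fderiv ℂ (tFun n j) q (0, Pi.single l 1)
        - fderiv ℂ (muFun n i) q (0, Pi.single l 1) * fderiv ℂ (tFun n j) q (Pi.single l 1, 0)
      = (Lagrange.basis univ q.1 l).coeff (i - 1)
          * (∏ m ∈ univ.erase l, (X - C (q.1 m))).coeff (n - j) := by
    intro l
    rw [tFun_fderiv_y q l, tFun_fderiv_x q l, muFun_fderiv_y q hq l, basis_coeff]
    ring
  rw [Finset.sum_congr rfl fun l _ => hterm l,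
    key_sum hn i j hi1 hin hj1 hjn q.1 hq]
  unfold tFun
  rfl
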